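/- Assume the GSVD setup with G̃ = U Υ̃ Xᵀ and L̃ = V M̃ Xᵀ, let r̃ ∈ ℝ^m, s_i := (Uᵀ r̃)_{i−q}, γ_i := ν_i/μ_i, and for σ > 0 let y(σ) be the minimizer of ‖G̃w − r̃‖₂² + σ⁻² ‖L̃w‖₂². Then ‖L̃ y(σ)‖₂² = σ⁴ Σ_{i=q+1}^{p} γ_i² s_i² / (γ_i² σ² + 1)². -/

import Mathlib

/-!
Substituting `z = Xᵀ w` and using that `U` and `V` are orthogonal turns the functional into
`‖Υ̃ z - Uᵀ r̃‖² + σ⁻² ‖M̃ z‖²`. Since `Υ̃` and `M̃` have at most one nonzero entry in each row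
and column, this is a sum of one-variable problems in the coordinates of `z`. A coordinate
`j < q` enters only the penalty, so `μ_j z_j = 0` at the minimum; a coordinate `q ≤ j < p`
minimizes `(ν_j t - s_j)² + σ⁻² (μ_j t)²`, whose normal equation `(ν_j² + σ⁻² μ_j²) t = ν_j s_j`
gives `(μ_j t)² = σ⁴ γ_j² s_j² / (γ_j² σ² + 1)²`; coordinates `j ≥ p` do not enter `L̃ y`.
-/

open Matrix Function Finset

theorem Matrix.mulVec_eq_of_eq_ite {ι κ R : Type*} [Fintype κ] [DecidableEq κ]
    [NonUnitalNonAssocSemiring R] (A : Matrix ι κ R) (e : ι → κ) (d : κ → R)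
    (hA : ∀ i j, A i j = if j = e i then d j else 0) (w : κ → R) :
    A *ᵥ w = fun i => d (e i) * w (e i) := by
  ext i
  simp [mulVec, dotProduct, hA]

theorem Matrix.sum_sq_mulVec_of_transpose_mul_self_eq_one {ι κ : Type*} [Fintype ι]
    [DecidableEq ι] [Fintype κ] (U : Matrix κ ι ℝ) (hU : Uᵀ * U = 1) (v : ι → ℝ) :
    ∑ i, (U *ᵥ v) i ^ 2 = ∑ i, v i ^ 2 := by
  have h : (U *ᵥ v) ⬝ᵥ (U *ᵥ v) = v ⬝ᵥ v := by
    rw [dotProduct_mulVec, vecMul_mulVec, hU, vecMul_one]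
  simpa [dotProduct, sq] using h

theorem Fin.sum_eq_sum_dite_add {M : Type*} [AddCommMonoid M] {m p q : ℕ} (hp : p ≤ q + m)
    (f : Fin p → M) (hf : ∀ i : Fin p, (i : ℕ) < q → f i = 0) :
    ∑ i, f i = ∑ k : Fin m, if h : q + k < p then f ⟨q + k, h⟩ else 0 := by
  symm
  refine Finset.sum_bij_ne_zero (fun k _ hk => ⟨q + k, by by_contra h; simp [h] at hk⟩)
    (by simp) (fun a _ _ b _ _ h => by simpa [Fin.ext_iff] using h) ?_ ?_
  · intro i _ hi
    have hqi : q ≤ i := by by_contra h; exact hi (hf i (by omega))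
    have hk : q + (i - q) < p := by omega
    have hik : (⟨q + (i - q), hk⟩ : Fin p) = i := by ext; simp only; omega
    exact ⟨⟨i - q, by omega⟩, mem_univ _, by simpa [hk, hik] using hi, hik⟩
  · intro k _ hk
    by_cases h : q + k < p
    · simp [h]
    · simp [h] at hk

theorem Fintype.sum_apply_update_comp {ι κ α M : Type*} [Fintype ι] [DecidableEq ι]
    [DecidableEq κ] [AddCommMonoid M] {e : ι → κ} (he : Injective e) (f : ι → α → M)
    (w : κ → α) (i₀ : ι) (t : α) :
    ∑ i, f i (update w (e i₀) t (e i)) = f i₀ t + ∑ i ∈ {i₀}ᶜ, f i (w (e i)) := by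
  rw [Fintype.sum_eq_add_sum_compl i₀, update_self]
  congr 1
  exact Finset.sum_congr rfl fun i hi => by rw [update_of_ne (he.ne (by simpa using hi))]

section CoordinatewiseMin

variable {ι ι' κ α M : Type*} [Fintype ι] [Fintype ι'] [DecidableEq ι'] [DecidableEq κ]
  [AddCommMonoid M] [PartialOrder M] [IsOrderedCancelAddMonoid M]
  {g : ι → κ} {c : ι' → κ} {a : ι → α → M} {b : ι' → α → M} {z : κ → α}

theorem add_le_add_of_forall_sum_comp_add_sum_comp_le [DecidableEq ι] (hg : Injective g)
    (hc : Injective c)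
    (hz : ∀ w : κ → α,
      ∑ k, a k (z (g k)) + ∑ i, b i (z (c i)) ≤ ∑ k, a k (w (g k)) + ∑ i, b i (w (c i)))
    {k : ι} {i : ι'} (hki : g k = c i) (t : α) :
    a k (z (g k)) + b i (z (g k)) ≤ a k t + b i t := by
  have key : ∀ u, ∑ k', a k' (update z (g k) u (g k')) + ∑ i', b i' (update z (g k) u (c i'))
      = a k u + b i u + (∑ k' ∈ {k}ᶜ, a k' (z (g k')) + ∑ i' ∈ {i}ᶜ, b i' (z (c i'))) := by
    intro u
    rw [Fintype.sum_apply_update_comp hg, hki, Fintype.sum_apply_update_comp hc]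
    abel
  have h₀ := key (z (g k))
  rw [update_eq_self] at h₀
  have h := hz (update z (g k) t)
  rw [h₀, key] at h
  exact le_of_add_le_add_right h

theorem le_of_forall_sum_comp_add_sum_comp_le (hc : Injective c)
    (hz : ∀ w : κ → α,
      ∑ k, a k (z (g k)) + ∑ i, b i (z (c i)) ≤ ∑ k, a k (w (g k)) + ∑ i, b i (w (c i)))
    {i : ι'} (hi : c i ∉ Set.range g) (t : α) :
    b i (z (c i)) ≤ b i t := by
  have key : ∀ u, ∑ k, a k (update z (c i) u (g k)) + ∑ i', b i' (update z (c i) u (c i'))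
      = b i u + (∑ k, a k (z (g k)) + ∑ i' ∈ {i}ᶜ, b i' (z (c i'))) := by
    intro u
    rw [Fintype.sum_apply_update_comp hc]
    simp only [update_of_ne (fun h => hi ⟨_, h⟩)]
    abel
  have h₀ := key (z (c i))
  rw [update_eq_self] at h₀
  have h := hz (update z (c i) t)
  rw [h₀, key] at h
  exact le_of_add_le_add_right h

end CoordinatewiseMin

theorem tikhonov_normal_eq_of_forall_le {ν μ s τ c : ℝ}
    (hmin : ∀ t, (ν * c - s) ^ 2 + τ * (μ * c) ^ 2 ≤ (ν * t - s) ^ 2 + τ * (μ * t) ^ 2) :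
    ν * (ν * c - s) + τ * μ ^ 2 * c = 0 := by
  have hloc : IsLocalMin (fun t => (ν * t - s) ^ 2 + τ * (μ * t) ^ 2) c :=
    Filter.Eventually.of_forall hmin
  have h₁ : HasDerivAt (fun t => ν * t - s) ν c := by
    simpa using ((hasDerivAt_id c).const_mul ν).sub_const s
  have h₂ : HasDerivAt (fun t => μ * t) μ c := by simpa using (hasDerivAt_id c).const_mul μ
  have h := hloc.hasDerivAt_eq_zero ((h₁.pow 2).add ((h₂.pow 2).const_mul τ))
  simp only [Nat.cast_ofNat, Nat.add_one_sub_one, pow_one] at h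
  linear_combination h / 2

theorem tikhonov_sq_mul_eq_of_normal_eq {ν μ s σ c : ℝ} (hσ : σ ≠ 0)
    (h : ν * (ν * c - s) + (σ ^ 2)⁻¹ * μ ^ 2 * c = 0) :
    (μ * c) ^ 2 = σ ^ 4 * ((ν / μ) ^ 2 * s ^ 2 / ((ν / μ) ^ 2 * σ ^ 2 + 1) ^ 2) := by
  rcases eq_or_ne μ 0 with rfl | hμ
  · simp -- `ν / 0 = 0`, so both sides vanish
  have hD : ν ^ 2 * σ ^ 2 + μ ^ 2 ≠ 0 := by positivity
  have hc : c = ν * s * σ ^ 2 / (ν ^ 2 * σ ^ 2 + μ ^ 2) := by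
    field_simp at h ⊢
    linarith
  rw [hc]
  field_simp

def tikhonovFunctional {ι ι' κ : Type*} [Fintype ι] [Fintype ι'] [Fintype κ]
    (A : Matrix ι κ ℝ) (B : Matrix ι' κ ℝ) (r : ι → ℝ) (τ : ℝ) (w : κ → ℝ) : ℝ :=
  ∑ i, ((A *ᵥ w - r) i) ^ 2 + τ * ∑ i, ((B *ᵥ w) i) ^ 2

section Tikhonov

variable {ι ι' κ : Type*} [Fintype ι] [Fintype ι'] [Fintype κ]

theorem tikhonovFunctional_mul_of_transpose_mul_self_eq_one [DecidableEq ι] [DecidableEq ι']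
    {U : Matrix ι ι ℝ} {V : Matrix ι' ι' ℝ} (hU : Uᵀ * U = 1) (hV : Vᵀ * V = 1)
    (A : Matrix ι κ ℝ) (B : Matrix ι' κ ℝ) (r : ι → ℝ) (τ : ℝ) (w : κ → ℝ) :
    tikhonovFunctional (U * A) (V * B) r τ w = tikhonovFunctional A B (Uᵀ *ᵥ r) τ w := by
  have hUr : U *ᵥ (Uᵀ *ᵥ r) = r := by
    rw [mulVec_mulVec, mul_eq_one_comm.mp hU, one_mulVec]
  have hA : (U * A) *ᵥ w - r = U *ᵥ (A *ᵥ w - Uᵀ *ᵥ r) := by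
    rw [mulVec_sub, hUr, mulVec_mulVec]
  rw [tikhonovFunctional, tikhonovFunctional, hA, ← mulVec_mulVec,
    sum_sq_mulVec_of_transpose_mul_self_eq_one U hU,
    sum_sq_mulVec_of_transpose_mul_self_eq_one V hV]

theorem tikhonovFunctional_mulVec_le_of_forall_le [DecidableEq κ] {Y : Matrix κ κ ℝ}
    (hY : IsUnit Y.det) {A : Matrix ι κ ℝ} {B : Matrix ι' κ ℝ} {r : ι → ℝ} {τ : ℝ} {y : κ → ℝ}
    (hy : ∀ w,
      tikhonovFunctional (A * Y) (B * Y) r τ y ≤ tikhonovFunctional (A * Y) (B * Y) r τ w)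
    (z : κ → ℝ) : tikhonovFunctional A B r τ (Y *ᵥ y) ≤ tikhonovFunctional A B r τ z := by
  have hYz : Y *ᵥ (Y⁻¹ *ᵥ z) = z := by rw [mulVec_mulVec, mul_nonsing_inv _ hY, one_mulVec]
  simpa only [tikhonovFunctional, ← mulVec_mulVec, hYz] using hy (Y⁻¹ *ᵥ z)

end Tikhonov

section DiagonalTikhonov

variable {ι ι' κ : Type*} [Fintype ι] [Fintype ι'] [Fintype κ] [DecidableEq κ]
  {A : Matrix ι κ ℝ} {B : Matrix ι' κ ℝ} {g : ι → κ} {c : ι' → κ} {ν μ : κ → ℝ}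
  {s : ι → ℝ} {z : κ → ℝ}

theorem tikhonovFunctional_eq_sum_of_eq_ite (hA : ∀ i j, A i j = if j = g i then ν j else 0)
    (hB : ∀ i j, B i j = if j = c i then μ j else 0) (τ : ℝ) (w : κ → ℝ) :
    tikhonovFunctional A B s τ w
      = ∑ k, (ν (g k) * w (g k) - s k) ^ 2 + ∑ i, τ * (μ (c i) * w (c i)) ^ 2 := by
  rw [tikhonovFunctional, mulVec_eq_of_eq_ite A g ν hA, mulVec_eq_of_eq_ite B c μ hB, mul_sum]
  rfl

theorem mulVec_apply_eq_zero_of_notMem_range [DecidableEq ι']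
    (hA : ∀ i j, A i j = if j = g i then ν j else 0)
    (hB : ∀ i j, B i j = if j = c i then μ j else 0) (hc : Injective c) {τ : ℝ} (hτ : 0 < τ)
    (hz : ∀ w, tikhonovFunctional A B s τ z ≤ tikhonovFunctional A B s τ w)
    {i : ι'} (hi : c i ∉ Set.range g) : (B *ᵥ z) i = 0 := by
  simp only [tikhonovFunctional_eq_sum_of_eq_ite hA hB] at hz
  have h := le_of_forall_sum_comp_add_sum_comp_le (a := fun k t => (ν (g k) * t - s k) ^ 2)
    (b := fun i t => τ * (μ (c i) * t) ^ 2) hc hz hi 0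
  rw [mul_zero, zero_pow two_ne_zero, mul_zero] at h
  rw [mulVec_eq_of_eq_ite B c μ hB]
  exact pow_eq_zero_iff two_ne_zero |>.mp
    (le_antisymm (nonpos_of_mul_nonpos_right h hτ) (sq_nonneg _))

theorem sq_mulVec_apply_eq_of_eq [DecidableEq ι] [DecidableEq ι']
    (hA : ∀ i j, A i j = if j = g i then ν j else 0)
    (hB : ∀ i j, B i j = if j = c i then μ j else 0) (hg : Injective g) (hc : Injective c)
    {σ : ℝ} (hσ : σ ≠ 0)
    (hz : ∀ w, tikhonovFunctional A B s (σ ^ 2)⁻¹ z ≤ tikhonovFunctional A B s (σ ^ 2)⁻¹ w)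
    {k : ι} {i : ι'} (hki : g k = c i) :
    (B *ᵥ z) i ^ 2
      = σ ^ 4 * ((ν (g k) / μ (g k)) ^ 2 * s k ^ 2
        / ((ν (g k) / μ (g k)) ^ 2 * σ ^ 2 + 1) ^ 2) := by
  simp only [tikhonovFunctional_eq_sum_of_eq_ite hA hB] at hz
  have hmin := add_le_add_of_forall_sum_comp_add_sum_comp_le
    (a := fun k t => (ν (g k) * t - s k) ^ 2) (b := fun i t => (σ ^ 2)⁻¹ * (μ (c i) * t) ^ 2)
    hg hc hz hki
  rw [← hki] at hmin
  simp only [mulVec_eq_of_eq_ite B c μ hB, ← hki]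
  exact tikhonov_sq_mul_eq_of_normal_eq hσ (tikhonov_normal_eq_of_forall_le hmin)

end DiagonalTikhonov

theorem gsvd_regularizer_norm_of_minimizer_general
    (m n p : ℕ) (hmn : m < n) (hpn : p ≤ n)
    (ν μ : ℕ → ℝ)
    (U : Matrix (Fin m) (Fin m) ℝ) (hU : Uᵀ * U = 1)
    (V : Matrix (Fin p) (Fin p) ℝ) (hV : Vᵀ * V = 1)
    (X : Matrix (Fin n) (Fin n) ℝ) (hX : IsUnit X.det)
    (Υt : Matrix (Fin m) (Fin n) ℝ)
    (hΥt : ∀ (i : Fin m) (j : Fin n), Υt i j = if (j : ℕ) = (n - m) + (i : ℕ) then ν j else 0)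
    (Mt : Matrix (Fin p) (Fin n) ℝ)
    (hMt : ∀ (i : Fin p) (j : Fin n), Mt i j = if (j : ℕ) = (i : ℕ) then μ j else 0)
    (Gt : Matrix (Fin m) (Fin n) ℝ) (hGt : Gt = U * Υt * Xᵀ)
    (Lt : Matrix (Fin p) (Fin n) ℝ) (hLt : Lt = V * Mt * Xᵀ)
    (rt : Fin m → ℝ)
    (σ : ℝ) (hσ : 0 < σ) (y : Fin n → ℝ)
    (hy : ∀ w : Fin n → ℝ,
      (∑ i, ((Gt *ᵥ y - rt) i) ^ 2) + (σ ^ 2)⁻¹ * (∑ i, ((Lt *ᵥ y) i) ^ 2)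
        ≤ (∑ i, ((Gt *ᵥ w - rt) i) ^ 2) + (σ ^ 2)⁻¹ * (∑ i, ((Lt *ᵥ w) i) ^ 2)) :
    (∑ i, ((Lt *ᵥ y) i) ^ 2)
      = σ ^ 4 * ∑ i : Fin m, (if (n - m) + (i : ℕ) < p
          then (ν ((n - m) + (i : ℕ)) / μ ((n - m) + (i : ℕ))) ^ 2 * ((Uᵀ *ᵥ rt) i) ^ 2
            / ((ν ((n - m) + (i : ℕ)) / μ ((n - m) + (i : ℕ))) ^ 2 * σ ^ 2 + 1) ^ 2
          else 0) := by
  let g : Fin m → Fin n := fun k => ⟨n - m + k, by omega⟩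
  let c : Fin p → Fin n := Fin.castLE hpn
  have hg : Injective g := fun k k' h => by simpa [g, Fin.ext_iff] using h
  have hc : Injective c := Fin.castLE_injective hpn
  have hΥ : ∀ i j, Υt i j = if j = g i then ν j else 0 := by simp [hΥt, g, Fin.ext_iff]
  have hM : ∀ i j, Mt i j = if j = c i then μ j else 0 := by simp [hMt, c, Fin.ext_iff]
  subst hGt hLt
  have hz := tikhonovFunctional_mulVec_le_of_forall_le (by rwa [det_transpose]) hy
  simp only [tikhonovFunctional_mul_of_transpose_mul_self_eq_one hU hV] at hz
  have hlow : ∀ i : Fin p, (i : ℕ) < n - m → (Mt *ᵥ (Xᵀ *ᵥ y)) i ^ 2 = 0 := fun i hi => by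
    rw [mulVec_apply_eq_zero_of_notMem_range hΥ hM hc (by positivity) hz, zero_pow two_ne_zero]
    rintro ⟨k, hk⟩
    simp only [g, c, Fin.ext_iff, Fin.val_castLE] at hk
    omega
  rw [← mulVec_mulVec, ← mulVec_mulVec, sum_sq_mulVec_of_transpose_mul_self_eq_one V hV,
    Fin.sum_eq_sum_dite_add (m := m) (by omega) _ hlow, mul_sum]
  refine sum_congr rfl fun k _ => ?_
  split_ifs with h
  · exact sq_mulVec_apply_eq_of_eq hΥ hM hg hc hσ.ne' hz (i := ⟨n - m + k, h⟩) rfl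
  · rw [mul_zero]

/-- In the GSVD setup, if y(σ) minimizes ‖G̃w − r̃‖₂² + σ⁻² ‖L̃w‖₂², then
‖L̃ y(σ)‖₂² = σ⁴ Σ_{i=q+1}^{p} γ_i² s_i² / (γ_i² σ² + 1)², where s_i := (Uᵀ r̃)_{i−q} and
γ_i := ν_i/μ_i. -/
theorem gsvd_regularizer_norm_of_minimizer
    (m n p : ℕ) (hm : 0 < m) (hmn : m < n) (hpn : p ≤ n) (hnmp : n ≤ m + p)
    (ν μ : ℕ → ℝ)
    (hν0 : ∀ i, n - m ≤ i → i < p → 0 < ν i)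
    (hν1 : ∀ i, n - m ≤ i → i < p → ν i < 1)
    (hνmono : ∀ i j, n - m ≤ i → i ≤ j → j < p → ν i ≤ ν j)
    (hμdef : ∀ i, n - m ≤ i → i < p → μ i = Real.sqrt (1 - ν i ^ 2))
    (hνtop : ∀ i, p ≤ i → i < n → ν i = 1)
    (hμlow : ∀ i, i < n - m → μ i = 1)
    (U : Matrix (Fin m) (Fin m) ℝ) (hU : Uᵀ * U = 1)
    (V : Matrix (Fin p) (Fin p) ℝ) (hV : Vᵀ * V = 1)
    (X : Matrix (Fin n) (Fin n) ℝ) (hX : IsUnit X.det)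
    (Υt : Matrix (Fin m) (Fin n) ℝ)
    (hΥt : ∀ (i : Fin m) (j : Fin n), Υt i j = if (j : ℕ) = (n - m) + (i : ℕ) then ν j else 0)
    (Mt : Matrix (Fin p) (Fin n) ℝ)
    (hMt : ∀ (i : Fin p) (j : Fin n), Mt i j = if (j : ℕ) = (i : ℕ) then μ j else 0)
    (Gt : Matrix (Fin m) (Fin n) ℝ) (hGt : Gt = U * Υt * Xᵀ)
    (Lt : Matrix (Fin p) (Fin n) ℝ) (hLt : Lt = V * Mt * Xᵀ)
    (rt : Fin m → ℝ)
    (σ : ℝ) (hσ : 0 < σ) (y : Fin n → ℝ)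
    (hy : ∀ w : Fin n → ℝ,
      (∑ i, ((Gt *ᵥ y - rt) i) ^ 2) + (σ ^ 2)⁻¹ * (∑ i, ((Lt *ᵥ y) i) ^ 2)
        ≤ (∑ i, ((Gt *ᵥ w - rt) i) ^ 2) + (σ ^ 2)⁻¹ * (∑ i, ((Lt *ᵥ w) i) ^ 2)) :
    (∑ i, ((Lt *ᵥ y) i) ^ 2)
      = σ ^ 4 * ∑ i : Fin m, (if (n - m) + (i : ℕ) < p
          then (ν ((n - m) + (i : ℕ)) / μ ((n - m) + (i : ℕ))) ^ 2 * ((Uᵀ *ᵥ rt) i) ^ 2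
            / ((ν ((n - m) + (i : ℕ)) / μ ((n - m) + (i : ℕ))) ^ 2 * σ ^ 2 + 1) ^ 2
          else 0) :=
  gsvd_regularizer_norm_of_minimizer_general m n p hmn hpn ν μ U hU V hV X hX Υt hΥt Mt hMt Gt hGt
    Lt hLt rt σ hσ y hy
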